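/- Law of large numbers for the collective bias model: Let μ be a symmetric probability measure on [−1,1] (invariant under m ↦ −m), and for each n let ℙ_CBM be the probability measure on {−1,1}^n given by ℙ_CBM(X_1 = x_1, …, X_n = x_n) = ∫_{[−1,1]} P_m(X_1 = x_1, …, X_n = x_n) μ(dm) for all configurations, where P_m is the product measure with P_m(X_i = 1) = (1+m)/2. Then S_n/n := (Σ_{i=1}^n X_i)/n converges in distribution to μ as n → ∞. -/

import Mathlib

open MeasureTheory ProbabilityTheory Filter Topology

noncomputable section

/-- The ±1 value of a vote. -/
def val (b : Bool) : ℝ := if b then 1 else -1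

/-- The measure on `Bool` with mass `(1+m)/2` on `true` and `(1−m)/2` on `false`;
for `m ∈ [−1,1]` this is the law of a single vote with bias `m`. -/
def bern (m : ℝ) : Measure Bool :=
  ENNReal.ofReal ((1 + m) / 2) • Measure.dirac true
    + ENNReal.ofReal ((1 - m) / 2) • Measure.dirac false

/-- The collective bias model with de Finetti measure `μ` and `n` voters:
`ℙ_CBM(A) = ∫_{[−1,1]} P_m(A) μ(dm)`, where `P_m` is the product of `n` copies of
the bias-`m` vote distribution. -/
def cbmMeasure (μ : Measure ℝ) (n : ℕ) : Measure (Fin n → Bool) :=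
  μ.bind fun m => Measure.pi fun _ : Fin n => bern m

/-! Given the bias `m`, the votes are i.i.d. with mean `m` and values in `[-1, 1]`, so `S_n/n` has
mean `m` and variance at most `1/n`. Since `|f x - f m| ≤ ε + C (x - m)²` for a bounded continuous
`f`, this gives `E_m[f(S_n/n)] → f(m)`. Integrating over `m ∼ μ` and applying dominated convergence
yields `E_CBM[f(S_n/n)] → ∫ f dμ`. -/

theorem BoundedContinuousFunction.exists_abs_sub_le_add_mul_sq (f : BoundedContinuousFunction ℝ ℝ)
    (m : ℝ) {ε : ℝ} (hε : 0 < ε) : ∃ C, ∀ x, |f x - f m| ≤ ε + C * (x - m) ^ 2 := by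
  obtain ⟨δ, hδ, hclose⟩ := Metric.continuous_iff.1 f.continuous m ε hε
  refine ⟨2 * ‖f‖ / δ ^ 2, fun x => ?_⟩
  have hC : 0 ≤ 2 * ‖f‖ / δ ^ 2 := by positivity
  by_cases hx : dist x m < δ
  · have hnear : |f x - f m| < ε := by simpa [Real.dist_eq] using hclose x hx
    nlinarith [sq_nonneg (x - m)]
  · have hfar : δ ^ 2 ≤ (x - m) ^ 2 := by
      rw [not_lt, Real.dist_eq] at hx
      nlinarith [sq_abs (x - m)]
    calc |f x - f m| = dist (f x) (f m) := (Real.dist_eq _ _).symm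
      _ ≤ 2 * ‖f‖ / δ ^ 2 * δ ^ 2 := by
        rw [div_mul_cancel₀ _ (by positivity)]; exact f.dist_le_two_norm x m
      _ ≤ ε + 2 * ‖f‖ / δ ^ 2 * (x - m) ^ 2 := by nlinarith

theorem tendsto_integral_comp_of_tendsto_variance {ι : Type*} {l : Filter ι} {Ω : ι → Type*}
    [∀ i, MeasurableSpace (Ω i)] {P : ∀ i, Measure (Ω i)} [∀ i, IsProbabilityMeasure (P i)]
    {Y : ∀ i, Ω i → ℝ} {m : ℝ} (hY : ∀ i, MemLp (Y i) 2 (P i))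
    (hmean : ∀ᶠ i in l, ∫ ω, Y i ω ∂(P i) = m) (hvar : Tendsto (fun i => Var[Y i; P i]) l (𝓝 0))
    (f : BoundedContinuousFunction ℝ ℝ) :
    Tendsto (fun i => ∫ ω, f (Y i ω) ∂(P i)) l (𝓝 (f m)) := by
  refine Metric.tendsto_nhds.2 fun ε hε => ?_
  obtain ⟨C, hC⟩ := f.exists_abs_sub_le_add_mul_sq m (half_pos hε)
  have hsmall : ∀ᶠ i in l, C * Var[Y i; P i] < ε / 2 := by
    have := (tendsto_const_nhds (x := C)).mul hvar
    rw [mul_zero] at this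
    exact this.eventually (gt_mem_nhds (half_pos hε))
  filter_upwards [hmean, hsmall] with i hmean_i hsmall_i
  have hfY : Integrable (fun ω => f (Y i ω)) (P i) :=
    (integrable_const ‖f‖).mono' (f.continuous.comp_aestronglyMeasurable (hY i).1)
      (ae_of_all _ fun ω => f.norm_coe_le_norm _)
  have hsq : Integrable (fun ω => (Y i ω - m) ^ 2) (P i) :=
    ((hY i).sub (memLp_const m)).integrable_sq
  have hvar_i : Var[Y i; P i] = ∫ ω, (Y i ω - m) ^ 2 ∂(P i) := by
    rw [variance_eq_integral (hY i).aestronglyMeasurable.aemeasurable, hmean_i]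
  calc dist (∫ ω, f (Y i ω) ∂(P i)) (f m) = ‖∫ ω, (f (Y i ω) - f m) ∂(P i)‖ := by
        rw [integral_sub hfY (integrable_const _), integral_const, probReal_univ, one_smul,
          dist_eq_norm]
    _ ≤ ∫ ω, (ε / 2 + C * (Y i ω - m) ^ 2) ∂(P i) :=
        norm_integral_le_of_norm_le ((integrable_const _).add (hsq.const_mul C))
          (ae_of_all _ fun ω => hC (Y i ω))
    _ = ε / 2 + C * Var[Y i; P i] := by
        rw [integral_add (integrable_const _) (hsq.const_mul C), integral_const, probReal_univ,
          one_smul, integral_const_mul, hvar_i]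
    _ < ε := by linarith

theorem integral_bind_of_fintype {α β E : Type*} [MeasurableSpace α] [MeasurableSpace β]
    [Fintype β] [MeasurableSingletonClass β] [NormedAddCommGroup E] [NormedSpace ℝ E]
    [CompleteSpace E] {μ : Measure α} [IsFiniteMeasure μ] {κ : α → Measure β} (hκ : Measurable κ)
    (hκ_prob : ∀ᵐ a ∂μ, IsProbabilityMeasure (κ a)) (g : β → E) :
    ∫ b, g b ∂(μ.bind κ) = ∫ a, ∫ b, g b ∂(κ a) ∂μ := by
  have hκ_meas : ∀ b, Measurable fun a => κ a {b} :=
    fun b => (Measure.measurable_coe (measurableSet_singleton b)).comp hκ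
  have : IsFiniteMeasure (μ.bind κ) := ⟨by
    rw [Measure.bind_apply .univ hκ.aemeasurable,
      lintegral_congr_ae (hκ_prob.mono fun a _ => measure_univ), lintegral_one]
    exact measure_lt_top μ _⟩
  have hint : ∀ b, Integrable (fun a => (κ a).real {b}) μ := fun b =>
    (integrable_const 1).mono' (hκ_meas b).ennreal_toReal.aestronglyMeasurable
      (hκ_prob.mono fun a _ => by
        rw [Real.norm_of_nonneg measureReal_nonneg]; exact measureReal_le_one)
  calc ∫ b, g b ∂(μ.bind κ) = ∑ b, (μ.bind κ).real {b} • g b := integral_fintype .of_finite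
    _ = ∑ b, (∫ a, (κ a).real {b} ∂μ) • g b := by
        refine Finset.sum_congr rfl fun b _ => ?_
        rw [measureReal_def, Measure.bind_apply (measurableSet_singleton b) hκ.aemeasurable,
          ← integral_toReal (hκ_meas b).aemeasurable (hκ_prob.mono fun a _ => measure_lt_top _ _)]
        rfl
    _ = ∫ a, ∑ b, (κ a).real {b} • g b ∂μ := by
        rw [integral_finsetSum _ fun b _ => (hint b).smul_const (g b)]
        simp_rw [integral_smul_const]
    _ = ∫ a, ∫ b, g b ∂(κ a) ∂μ :=
        integral_congr_ae (hκ_prob.mono fun a _ => (integral_fintype .of_finite).symm)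

lemma val_mem_Icc (b : Bool) : val b ∈ Set.Icc (-1 : ℝ) 1 := by
  cases b <;> norm_num [val]

lemma bern_singleton (m : ℝ) (b : Bool) :
    bern m {b} = ENNReal.ofReal (if b then (1 + m) / 2 else (1 - m) / 2) := by
  cases b <;> simp [bern]

lemma bern_univ (m : ℝ) :
    bern m Set.univ = ENNReal.ofReal ((1 + m) / 2) + ENNReal.ofReal ((1 - m) / 2) := by
  simp [bern]

instance isFiniteMeasure_bern (m : ℝ) : IsFiniteMeasure (bern m) :=
  ⟨by rw [bern_univ]; exact ENNReal.add_lt_top.2 ⟨ENNReal.ofReal_lt_top, ENNReal.ofReal_lt_top⟩⟩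

lemma measurable_bern_singleton (b : Bool) : Measurable fun m => bern m {b} := by
  cases b <;> simp only [bern_singleton, Bool.false_eq_true, ↓reduceIte] <;> fun_prop

lemma measurable_pi_bern (n : ℕ) : Measurable fun m : ℝ => Measure.pi fun _ : Fin n => bern m := by
  classical
  refine Measure.measurable_of_measurable_coe _ fun s _ => ?_
  have hsum : ∀ m,
      (Measure.pi fun _ : Fin n => bern m) s = ∑ ω ∈ s.toFinset, ∏ i, bern m {ω i} := by
    intro m
    nth_rw 1 [← Set.coe_toFinset s]
    rw [← sum_measure_singleton]
    exact Finset.sum_congr rfl fun ω _ => by rw [← Set.univ_pi_singleton ω, Measure.pi_pi]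
  simp_rw [hsum]
  exact Finset.measurable_sum _ fun ω _ => Finset.measurable_prod _ fun i _ =>
    measurable_bern_singleton (ω i)

section BiasedVotes

variable {m : ℝ} (hm : m ∈ Set.Icc (-1 : ℝ) 1)
include hm

lemma isProbabilityMeasure_bern : IsProbabilityMeasure (bern m) := by
  constructor
  rw [bern_univ, ← ENNReal.ofReal_add (by linarith [hm.1]) (by linarith [hm.2])]
  ring_nf
  exact ENNReal.ofReal_one

lemma integral_bern (g : Bool → ℝ) :
    ∫ b, g b ∂(bern m) = (1 + m) / 2 * g true + (1 - m) / 2 * g false := by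
  simp only [integral_fintype (.of_finite (f := g)), Fintype.sum_bool, measureReal_def,
    bern_singleton, if_true, Bool.false_eq_true, if_false, smul_eq_mul]
  rw [ENNReal.toReal_ofReal (by linarith [hm.1]), ENNReal.toReal_ofReal (by linarith [hm.2])]

lemma integral_val_bern : ∫ b, val b ∂(bern m) = m := by
  rw [integral_bern hm]; norm_num [val]; ring

lemma integral_sum_val_div_pi_bern {n : ℕ} (hn : n ≠ 0) :
    ∫ ω, (∑ i, val (ω i)) / n ∂(Measure.pi fun _ : Fin n => bern m) = m := by
  have := isProbabilityMeasure_bern hm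
  rw [integral_div, integral_finsetSum _ fun i _ => .of_finite]
  simp_rw [integral_comp_eval (μ := fun _ : Fin n => bern m)
    (measurable_of_finite val).aestronglyMeasurable, integral_val_bern hm]
  simp only [Finset.sum_const, Finset.card_univ, Fintype.card_fin, nsmul_eq_mul]
  field_simp

lemma variance_sum_val_div_pi_bern_le (n : ℕ) :
    Var[fun ω => (∑ i, val (ω i)) / n; Measure.pi fun _ : Fin n => bern m] ≤ 1 / n := by
  have := isProbabilityMeasure_bern hm
  have hval : Var[val; bern m] ≤ 1 := by
    have := variance_le_sq_of_bounded (ae_of_all (bern m) val_mem_Icc)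
      (measurable_of_finite val).aemeasurable
    norm_num at this
    exact this
  have hsum : Var[fun ω => ∑ i, val (ω i); Measure.pi fun _ : Fin n => bern m]
      = n * Var[val; bern m] := by
    have := variance_sum_pi (μ := fun _ : Fin n => bern m) (X := fun _ => val)
      fun _ => .of_discrete
    simpa [Finset.sum_fn] using this
  calc Var[fun ω => (∑ i, val (ω i)) / n; Measure.pi fun _ : Fin n => bern m]
      = ((n : ℝ)⁻¹) ^ 2 * (n * Var[val; bern m]) := by
        simp_rw [div_eq_inv_mul]; rw [variance_const_mul, hsum]
    _ ≤ 1 / n := by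
        rcases eq_or_ne n 0 with rfl | hn
        · simp
        · rw [sq, mul_assoc, inv_mul_cancel_left₀ (by exact_mod_cast hn), one_div]
          exact mul_le_of_le_one_right (by positivity) hval

lemma tendsto_integral_pi_bern (f : BoundedContinuousFunction ℝ ℝ) :
    Tendsto (fun n : ℕ => ∫ ω, f ((∑ i, val (ω i)) / n) ∂(Measure.pi fun _ : Fin n => bern m))
      atTop (𝓝 (f m)) := by
  have := isProbabilityMeasure_bern hm
  refine tendsto_integral_comp_of_tendsto_variance (Ω := fun n => Fin n → Bool)
    (Y := fun n ω => (∑ i, val (ω i)) / n) (fun _ => .of_discrete) ?_ ?_ f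
  · filter_upwards [eventually_ne_atTop 0] with n hn using integral_sum_val_div_pi_bern hm hn
  · exact squeeze_zero (fun n => variance_nonneg _ _) (variance_sum_val_div_pi_bern_le hm)
      tendsto_one_div_atTop_nhds_zero_nat

end BiasedVotes

theorem cbm_law_of_large_numbers
    (μ : Measure ℝ) (hprob : IsProbabilityMeasure μ)
    (hsupp : μ (Set.Icc (-1 : ℝ) 1)ᶜ = 0) :
    ∀ f : BoundedContinuousFunction ℝ ℝ,
      Tendsto
        (fun n : ℕ => ∫ ω, f ((∑ i, val (ω i)) / n) ∂(cbmMeasure μ n))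
        atTop (𝓝 (∫ x, f x ∂μ)) := by
  intro f
  have hIcc : ∀ᵐ m ∂μ, m ∈ Set.Icc (-1 : ℝ) 1 := mem_ae_iff.2 hsupp
  have hmix : ∀ n : ℕ, ∫ ω, f ((∑ i, val (ω i)) / n) ∂(cbmMeasure μ n)
      = ∫ m, ∫ ω, f ((∑ i, val (ω i)) / n) ∂(Measure.pi fun _ : Fin n => bern m) ∂μ :=
    fun n => integral_bind_of_fintype (measurable_pi_bern n)
      (hIcc.mono fun m hm => by have := isProbabilityMeasure_bern hm; infer_instance) _
  simp_rw [hmix]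
  refine tendsto_integral_of_dominated_convergence (fun _ => ‖f‖)
    (fun n => (measurable_of_finite _).stronglyMeasurable.integral_kernel
      (κ := ⟨_, measurable_pi_bern n⟩) |>.aestronglyMeasurable)
    (integrable_const _) (fun n => hIcc.mono fun m hm => ?_)
    (hIcc.mono fun m hm => tendsto_integral_pi_bern hm f)
  have := isProbabilityMeasure_bern hm
  simpa using norm_integral_le_of_norm_le_const (μ := Measure.pi fun _ : Fin n => bern m)
    (ae_of_all _ fun ω => f.norm_coe_le_norm ((∑ i, val (ω i)) / n))
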